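/- arXiv:2204.00614 — 2 statements merged into one kernel-verified Lean document; each statement's English description precedes it below -/
import Mathlib

section
/- Let M¹(v), M²(v) be m×m real matrices and η¹(v), η²(v) ∈ ℝ^m, parameterized by v > 0, such that as v → 0, M¹(v) → M and M²(v) → M for some invertible matrix M, and η¹(v) → η, η²(v) → η for some η ∈ ℝ^m. If γ(v) ∈ ℝ^m satisfies the componentwise inequalities η¹ᵢ(v) ≤ (M¹(v)γ(v))ᵢ and (M²(v)γ(v))ᵢ ≤ η²ᵢ(v) for all i = 1,...,m, then γ(v) → M⁻¹η as v → 0. -/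
/-!
Put `w = M² γ` and `E = M¹ (M²)⁻¹ - 1`; eventually `M²` is invertible, and the hypotheses become
`η¹ ≤ w + E w` and `w ≤ η²` with `E → 0`. In the sup norm this gives
`‖w‖ ≤ max ‖η¹‖ ‖η²‖ + ‖E‖ ‖w‖`, so `w` is eventually bounded, hence `E w → 0` and `w` is squeezed
to `η`. Finally `γ = (M²)⁻¹ w → M⁻¹ η`.
-/

open Matrix Filter Topology
open scoped Matrix.Norms.Operator

section

variable {ι : Type*} [Fintype ι]

theorem norm_le_max_add_of_le_add_of_le {lo hi w e : ι → ℝ} (hlo : lo ≤ w + e) (hhi : w ≤ hi) :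
    ‖w‖ ≤ max ‖lo‖ ‖hi‖ + ‖e‖ := by
  refine (pi_norm_le_iff_of_nonneg (by positivity)).2 fun i => abs_le.2 ⟨?_, ?_⟩
  · have hlo_i : -‖lo‖ ≤ lo i := neg_le_of_abs_le (norm_le_pi_norm lo i)
    have he_i : e i ≤ ‖e‖ := (le_abs_self _).trans (norm_le_pi_norm e i)
    linarith [show lo i ≤ w i + e i from hlo i, le_max_left ‖lo‖ ‖hi‖]
  · have hhi_i : hi i ≤ ‖hi‖ := (le_abs_self _).trans (norm_le_pi_norm hi i)
    linarith [hhi i, le_max_right ‖lo‖ ‖hi‖, norm_nonneg e]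

theorem norm_le_two_mul_of_le_add_mulVec_of_le {lo hi w : ι → ℝ} {E : Matrix ι ι ℝ}
    (hE : ‖E‖ ≤ 1 / 2) (hlo : lo ≤ w + E *ᵥ w) (hhi : w ≤ hi) :
    ‖w‖ ≤ 2 * max ‖lo‖ ‖hi‖ := by
  have hEw : ‖E *ᵥ w‖ ≤ ‖w‖ / 2 :=
    calc ‖E *ᵥ w‖ ≤ ‖E‖ * ‖w‖ := linfty_opNorm_mulVec E w
      _ ≤ 1 / 2 * ‖w‖ := by gcongr
      _ = ‖w‖ / 2 := by ring
  linarith [norm_le_max_add_of_le_add_of_le hlo hhi]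

variable {α : Type*} {l : Filter α}

theorem isBoundedUnder_norm_of_le_add_mulVec_of_le {lo hi w : α → ι → ℝ} {E : α → Matrix ι ι ℝ}
    {a b : ι → ℝ} (hE : Tendsto E l (𝓝 0)) (hlo : Tendsto lo l (𝓝 a)) (hhi : Tendsto hi l (𝓝 b))
    (hlow : ∀ᶠ x in l, lo x ≤ w x + E x *ᵥ w x) (hupp : ∀ᶠ x in l, w x ≤ hi x) :
    IsBoundedUnder (· ≤ ·) l fun x => ‖w x‖ := by
  have hsmall : ∀ᶠ x in l, ‖E x‖ ≤ 1 / 2 :=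
    (tendsto_zero_iff_norm_tendsto_zero.1 hE).eventually_le_const (by norm_num)
  have hloB := hlo.norm.eventually_le_const (lt_add_one ‖a‖)
  have hhiB := hhi.norm.eventually_le_const (lt_add_one ‖b‖)
  refine ⟨2 * max (‖a‖ + 1) (‖b‖ + 1), eventually_map.2 ?_⟩
  filter_upwards [hsmall, hlow, hupp, hloB, hhiB] with x hEx hlx hux hlox hhix
  exact (norm_le_two_mul_of_le_add_mulVec_of_le hEx hlx hux).trans (by gcongr)

omit [Fintype ι] in
theorem tendsto_pi_of_tendsto_of_tendsto_of_le_of_le' {f g h : α → ι → ℝ} {a : ι → ℝ}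
    (hg : Tendsto g l (𝓝 a)) (hh : Tendsto h l (𝓝 a)) (hgf : ∀ᶠ x in l, g x ≤ f x)
    (hfh : ∀ᶠ x in l, f x ≤ h x) : Tendsto f l (𝓝 a) :=
  tendsto_pi_nhds.2 fun i => tendsto_of_tendsto_of_tendsto_of_le_of_le'
    (tendsto_pi_nhds.1 hg i) (tendsto_pi_nhds.1 hh i)
    (hgf.mono fun _ hx => hx i) (hfh.mono fun _ hx => hx i)

theorem tendsto_of_le_add_mulVec_of_le {lo hi w : α → ι → ℝ} {E : α → Matrix ι ι ℝ}
    {a : ι → ℝ} (hE : Tendsto E l (𝓝 0)) (hlo : Tendsto lo l (𝓝 a)) (hhi : Tendsto hi l (𝓝 a))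
    (hlow : ∀ᶠ x in l, lo x ≤ w x + E x *ᵥ w x) (hupp : ∀ᶠ x in l, w x ≤ hi x) :
    Tendsto w l (𝓝 a) := by
  obtain ⟨C, hC⟩ := isBoundedUnder_norm_of_le_add_mulVec_of_le hE hlo hhi hlow hupp
  have hEw : Tendsto (fun x => E x *ᵥ w x) l (𝓝 0) := by
    refine squeeze_zero_norm' ?_
      (by simpa using (tendsto_zero_iff_norm_tendsto_zero.1 hE).mul_const C)
    filter_upwards [eventually_map.1 hC] with x hx
    exact (linfty_opNorm_mulVec _ _).trans (by gcongr)
  refine tendsto_pi_of_tendsto_of_tendsto_of_le_of_le' (g := fun x => lo x - E x *ᵥ w x)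
    (by simpa using hlo.sub hEw) hhi ?_ hupp
  filter_upwards [hlow] with x hx
  exact sub_le_iff_le_add.2 hx

end

theorem mulVec_add_mul_inv_sub_one_mulVec {n R : Type*} [Fintype n] [DecidableEq n] [CommRing R]
    (A B : Matrix n n R) (hB : IsUnit B.det) (x : n → R) :
    B *ᵥ x + (A * B⁻¹ - 1) *ᵥ (B *ᵥ x) = A *ᵥ x := by
  rw [sub_mulVec, mulVec_mulVec, Matrix.mul_assoc, nonsing_inv_mul B hB, Matrix.mul_one,
    one_mulVec, add_sub_cancel]

/-- A linear algebra limit tool: if `M¹(v), M²(v) → M` (invertible), `η¹(v), η²(v) → η`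
as `v → 0⁺`, and `γ(v)` satisfies `η¹ᵢ(v) ≤ (M¹(v)γ(v))ᵢ` and `(M²(v)γ(v))ᵢ ≤ η²ᵢ(v)` for all
`i` and all `v > 0`, then `γ(v) → M⁻¹η` as `v → 0⁺`. -/
theorem linear_algebra_limit {m : ℕ}
    (M1 M2 : ℝ → Matrix (Fin m) (Fin m) ℝ) (η1 η2 : ℝ → (Fin m → ℝ))
    (M : Matrix (Fin m) (Fin m) ℝ) (η : Fin m → ℝ) (γ : ℝ → (Fin m → ℝ))
    (hM : IsUnit M.det)
    (hM1 : Tendsto M1 (nhdsWithin 0 (Set.Ioi 0)) (nhds M))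
    (hM2 : Tendsto M2 (nhdsWithin 0 (Set.Ioi 0)) (nhds M))
    (hη1 : Tendsto η1 (nhdsWithin 0 (Set.Ioi 0)) (nhds η))
    (hη2 : Tendsto η2 (nhdsWithin 0 (Set.Ioi 0)) (nhds η))
    (hineq1 : ∀ v ∈ Set.Ioi (0 : ℝ), ∀ i, η1 v i ≤ (M1 v *ᵥ γ v) i)
    (hineq2 : ∀ v ∈ Set.Ioi (0 : ℝ), ∀ i, (M2 v *ᵥ γ v) i ≤ η2 v i) :
    Tendsto γ (nhdsWithin 0 (Set.Ioi 0)) (nhds (M⁻¹ *ᵥ η)) := by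
  have hpos : ∀ᶠ v in 𝓝[>] (0 : ℝ), v ∈ Set.Ioi 0 := self_mem_nhdsWithin
  have hunit : ∀ᶠ v in 𝓝[>] (0 : ℝ), IsUnit (M2 v).det :=
    ((continuous_id.matrix_det.tendsto M).comp hM2).eventually (Units.isOpen.mem_nhds hM)
  have hinv : Tendsto (fun v => (M2 v)⁻¹) (𝓝[>] 0) (𝓝 M⁻¹) := by
    refine (continuousAt_matrix_inv M ?_).tendsto.comp hM2
    obtain ⟨u, hu⟩ := hM
    rw [← hu]
    exact NormedRing.inverse_continuousAt u
  have hE : Tendsto (fun v => M1 v * (M2 v)⁻¹ - 1) (𝓝[>] 0) (𝓝 0) := by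
    simpa [mul_nonsing_inv M hM] using (hM1.mul hinv).sub_const 1
  have hw : Tendsto (fun v => M2 v *ᵥ γ v) (𝓝[>] 0) (𝓝 η) := by
    refine tendsto_of_le_add_mulVec_of_le hE hη1 hη2 ?_ (hpos.mono hineq2)
    filter_upwards [hpos, hunit] with v hv hv'
    rw [mulVec_add_mul_inv_sub_one_mulVec _ _ hv']
    exact hineq1 v hv
  refine (((continuous_fst.matrix_mulVec continuous_snd).tendsto _).comp
    (hinv.prodMk_nhds hw)).congr' ?_
  filter_upwards [hunit] with v hv
  simp [mulVec_mulVec, nonsing_inv_mul _ hv]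
end

section
/- Fix T > 0 and real numbers ξ₁ < ξ₂ < ... < ξ_m. The m×m matrix with entries A_{ij} = p(T/2, ξ_j - (i-1)), where p(t,x) = (2πt)^{-1/2} exp(-x²/(2t)) is the heat kernel, is invertible; its determinant equals (πT)^{-m/2} ∏_{i=1}^m exp(-(ξ_i² + (i-1)²)/T) · ∏_{i<j} (exp(2ξ_j/T) - exp(2ξ_i/T)), which is nonzero. -/
/-!
Completing the square, `p(T/2, ξ - k) = (πT)^{-1/2} e^{-k²/T} e^{-ξ²/T} (e^{2ξ/T})^k`, so the matrix
is a Vandermonde matrix in the nodes `e^{2ξ_j/T}` with its rows and columns rescaled by positive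
factors. The nodes are distinct because `ξ` is strictly increasing, so the determinant is nonzero.
-/

open Real Matrix Finset

/-- The one-dimensional heat kernel `p(t,x) = (2πt)^{-1/2} exp(-x²/(2t))` for `t > 0`. -/
noncomputable def heatKernel (t x : ℝ) : ℝ :=
  Real.exp (-x ^ 2 / (2 * t)) / Real.sqrt (2 * Real.pi * t)

theorem det_of_mul_vandermonde {R : Type*} [CommRing R] {n : ℕ} (c : R) (a b x : Fin n → R) :
    (of fun i j : Fin n => c * (b i * (a j * x j ^ (i : ℕ)))).det
      = c ^ n * (∏ i, b i) * (∏ j, a j) * ∏ i, ∏ j ∈ Ioi i, (x j - x i) := by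
  have hM : (of fun i j : Fin n => c * (b i * (a j * x j ^ (i : ℕ))))
      = c • of fun i j => b i * (of fun i j => a j * (vandermonde x)ᵀ i j) i j := by
    ext i j
    simp [vandermonde]
  rw [hM, det_smul, det_mul_column, det_mul_row, det_transpose, det_vandermonde, Fintype.card_fin]
  ring

theorem inv_sqrt_pow_eq_rpow {a : ℝ} (ha : 0 ≤ a) (n : ℕ) :
    (√a)⁻¹ ^ n = a ^ (-(n : ℝ) / 2) := by
  rw [sqrt_eq_rpow, ← rpow_neg ha, ← rpow_natCast, ← rpow_mul ha]
  ring_nf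

theorem heatKernel_half_sub_natCast (T x : ℝ) (k : ℕ) :
    heatKernel (T / 2) (x - k)
      = (√(π * T))⁻¹ * (exp (-(k : ℝ) ^ 2 / T) * (exp (-x ^ 2 / T) * exp (2 * x / T) ^ k)) := by
  rw [heatKernel, ← exp_nat_mul, ← exp_add, ← exp_add, show 2 * π * (T / 2) = π * T by ring,
    div_eq_inv_mul]
  congr 2
  ring

/-- For `T > 0` and `ξ₁ < ⋯ < ξ_m`, the matrix `A_{ij} = p(T/2, ξ_j - (i-1))` has determinant
`(πT)^{-m/2} ∏ᵢ exp(-(ξᵢ² + (i-1)²)/T) · ∏_{i<j}(exp(2ξ_j/T) - exp(2ξᵢ/T))`, which is nonzero;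
in particular the matrix is invertible. -/
theorem heatKernel_matrix_det {m : ℕ} (T : ℝ) (hT : 0 < T)
    (ξ : Fin m → ℝ) (hξ : StrictMono ξ) :
    (Matrix.of fun i j : Fin m => heatKernel (T / 2) (ξ j - (i : ℝ))).det
        = (Real.pi * T) ^ (-(m : ℝ) / 2)
            * (∏ i : Fin m, Real.exp (-(ξ i ^ 2 + (i : ℝ) ^ 2) / T))
            * ∏ i : Fin m, ∏ j ∈ Finset.Ioi i,
                (Real.exp (2 * ξ j / T) - Real.exp (2 * ξ i / T)) ∧
      (Matrix.of fun i j : Fin m => heatKernel (T / 2) (ξ j - (i : ℝ))).det ≠ 0 ∧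
      IsUnit (Matrix.of fun i j : Fin m => heatKernel (T / 2) (ξ j - (i : ℝ))) := by
  have hdet : (of fun i j : Fin m => heatKernel (T / 2) (ξ j - (i : ℝ))).det
      = (π * T) ^ (-(m : ℝ) / 2) * (∏ i : Fin m, exp (-(ξ i ^ 2 + (i : ℝ) ^ 2) / T))
          * ∏ i : Fin m, ∏ j ∈ Ioi i, (exp (2 * ξ j / T) - exp (2 * ξ i / T)) := by
    simp only [heatKernel_half_sub_natCast, det_of_mul_vandermonde,
      inv_sqrt_pow_eq_rpow (mul_pos pi_pos hT).le]
    rw [mul_assoc ((π * T) ^ _), ← prod_mul_distrib]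
    congr 2
    exact prod_congr rfl fun i _ => by rw [← exp_add]; ring_nf
  have hnodes : Function.Injective fun j => exp (2 * ξ j / T) := fun i j h =>
    hξ.injective (by simpa [hT.ne'] using h)
  have hne : (of fun i j : Fin m => heatKernel (T / 2) (ξ j - (i : ℝ))).det ≠ 0 := by
    rw [hdet, ← det_vandermonde]
    exact mul_ne_zero (by positivity) (det_vandermonde_ne_zero_iff.2 hnodes)
  exact ⟨hdet, hne, (isUnit_iff_isUnit_det _).2 hne.isUnit⟩
end
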